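/- For every state D on the generalized type semigroup W(X,G), the function D̄ defined by D̄([a]) = sup_{ε>0} D([(a−ε)_+]) is a lower semi-continuous state on W(X,G), i.e., D̄ is order-preserving, additive, sends 0 to 0, and satisfies D̄([a]) = sup_{ε>0} D̄([(a−ε)_+]) for all a. -/

import Mathlib

open scoped Pointwise NNReal ENNReal

variable {X : Type*} [TopologicalSpace X] {G : Type*} [Group G] [MulAction G X]

/-- The open support of a continuous `ℝ≥0`-valued function. -/
def osupp (f : C(X, ℝ≥0)) : Set X := {x | f x ≠ 0}

/-- Dynamical subequivalence `A ≼ B` for two finite tuples (lists) of subsets of `X`. -/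
def SetSubeq (G : Type*) [Group G] [MulAction G X] (A B : List (Set X)) : Prop :=
  ∀ F : Fin A.length → Set X,
    (∀ i, IsClosed (F i) ∧ F i ⊆ A.get i) →
    ∃ (J : Fin A.length → ℕ)
      (U : (i : Fin A.length) → Fin (J i) → Set X)
      (s : (i : Fin A.length) → Fin (J i) → G)
      (k : (i : Fin A.length) → Fin (J i) → Fin B.length),
      (∀ i j, IsOpen (U i j)) ∧
      (∀ i, F i ⊆ ⋃ j, U i j) ∧
      (∀ i j, (s i j) • U i j ⊆ B.get (k i j)) ∧
      (∀ (p q : Σ i : Fin A.length, Fin (J i)), p ≠ q → k p.1 p.2 = k q.1 q.2 →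
        Disjoint ((s p.1 p.2) • U p.1 p.2) ((s q.1 q.2) • U q.1 q.2))

/-- Dynamical subequivalence `a ≼ b` for tuples of nonnegative continuous functions. -/
def DynSubeq (G : Type*) [Group G] [MulAction G X] (a b : List C(X, ℝ≥0)) : Prop :=
  SetSubeq G (a.map osupp) (b.map osupp)

/-- The entrywise cut-down `(f - ε)₊`. -/
noncomputable def cutFun (f : C(X, ℝ≥0)) (ε : ℝ≥0) : C(X, ℝ≥0) :=
  ⟨fun x => f x - ε, f.continuous.sub continuous_const⟩

noncomputable def cutList (a : List C(X, ℝ≥0)) (ε : ℝ≥0) : List C(X, ℝ≥0) := a.map (cutFun · ε)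

/-- Membership in the algebra of sets generated by the open sets of `X`. -/
def InAlg (X : Type*) [TopologicalSpace X] (s : Set X) : Prop :=
  s ∈ MeasureTheory.generateSetAlgebra {t : Set X | IsOpen t}

/-- A `G`-invariant regular premeasure on the algebra generated by the open sets. -/
structure InvRegPremeasure (X : Type*) [TopologicalSpace X] (G : Type*) [Group G]
    [MulAction G X] where
  m : Set X → ℝ≥0∞
  junk : ∀ s : Set X, ¬ InAlg X s → m s = 0
  empty' : m ∅ = 0
  countably_additive : ∀ A : ℕ → Set X, (∀ n, InAlg X (A n)) →
    Pairwise (Function.onFun Disjoint A) → InAlg X (⋃ n, A n) →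
    m (⋃ n, A n) = ∑' n, m (A n)
  invariant : ∀ (g : G) (s : Set X), InAlg X s → m (g • s) = m s
  inner_regular : ∀ s : Set X, InAlg X s →
    m s = ⨆ (F : Set X) (_ : IsCompact F ∧ F ⊆ s), m F
  outer_regular : ∀ s : Set X, InAlg X s →
    m s = ⨅ (O : Set X) (_ : IsOpen O ∧ s ⊆ O), m O

/-- A state on the generalized type semigroup `W(X, G)`, described at the level of
`K(X, G)`: a function on tuples which is monotone for `≼`, additive for concatenation,
and vanishes on the empty tuple. -/
structure DynState (X : Type*) [TopologicalSpace X] (G : Type*) [Group G]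
    [MulAction G X] where
  toFun : List C(X, ℝ≥0) → ℝ≥0∞
  mono : ∀ a b, DynSubeq G a b → toFun a ≤ toFun b
  additive : ∀ a b, toFun (a ++ b) = toFun a + toFun b
  zero' : toFun [] = 0

/-- Lower semicontinuity of a state. -/
def DynState.LSC (D : DynState X G) : Prop :=
  ∀ a, D.toFun a = ⨆ (ε : ℝ≥0) (_ : 0 < ε), D.toFun (cutList a ε)

/-! Cutting `a` down by `ε` shrinks its open supports to `{ε < aᵢ}`, whose closures lie in the
closed sets `{ε ≤ aᵢ} ⊆ osupp aᵢ`. A witness of `a ≼ b` for these closed sets, shrunk to open sets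
with closures inside it, moves the `{ε < aᵢ}` into compact subsets of the open supports of `b`,
on which every `b_k` is bounded below by one `δ > 0`; so `(a - ε)₊ ≼ (b - δ)₊`, and `D̄` is
monotone. Additivity holds because `ε ↦ D((a - ε)₊)` is antitone, and lower semicontinuity
because `((a - ε)₊ - δ)₊ = (a - (ε + δ))₊`. -/

open Filter Topology

/-- `SetSubeq` for families indexed by `Fin n`, so that it can be transported along equalities
of lengths: `SetSubeq G A B` is `SetFamSubeq G A.get B.get` by definition. -/
def SetFamSubeq (G : Type*) [Group G] [MulAction G X] {n m : ℕ}
    (A : Fin n → Set X) (B : Fin m → Set X) : Prop :=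
  ∀ F : Fin n → Set X, (∀ i, IsClosed (F i) ∧ F i ⊆ A i) →
    ∃ (J : Fin n → ℕ) (U : (i : Fin n) → Fin (J i) → Set X)
      (s : (i : Fin n) → Fin (J i) → G) (k : (i : Fin n) → Fin (J i) → Fin m),
      (∀ i j, IsOpen (U i j)) ∧
      (∀ i, F i ⊆ ⋃ j, U i j) ∧
      (∀ i j, (s i j) • U i j ⊆ B (k i j)) ∧
      (∀ (p q : Σ i : Fin n, Fin (J i)), p ≠ q → k p.1 p.2 = k q.1 q.2 →
        Disjoint ((s p.1 p.2) • U p.1 p.2) ((s q.1 q.2) • U q.1 q.2))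

lemma setFamSubeq_comp_cast {n n' m m' : ℕ} (hn : n' = n) (hm : m' = m)
    {A : Fin n → Set X} {B : Fin m → Set X} :
    SetFamSubeq G (A ∘ Fin.cast hn) (B ∘ Fin.cast hm) ↔ SetFamSubeq G A B := by
  subst hn hm
  rfl

lemma SetFamSubeq.of_subset {n : ℕ} {A B : Fin n → Set X} (hB : ∀ i, IsOpen (B i))
    (h : ∀ i, A i ⊆ B i) : SetFamSubeq G A B := by
  refine fun F hF => ⟨fun _ => 1, fun i _ => B i, fun _ _ => 1, fun i _ => i,
    fun i _ => hB i, fun i => ?_, fun _ _ => ?_, ?_⟩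
  · exact (hF i).2.trans ((h i).trans (Set.subset_iUnion (fun _ : Fin 1 => B i) 0))
  · rw [one_smul]
  · rintro ⟨i, j⟩ ⟨i', j'⟩ hne rfl
    exact absurd (by rw [Subsingleton.elim j j']) hne

lemma dynSubeq_map_iff {φ ψ : C(X, ℝ≥0) → C(X, ℝ≥0)} {a b : List C(X, ℝ≥0)} :
    DynSubeq G (a.map φ) (b.map ψ) ↔
      SetFamSubeq G (fun i : Fin a.length => osupp (φ a[i]))
        (fun k : Fin b.length => osupp (ψ b[k])) := by
  have hA : ((a.map φ).map osupp).get =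
      (fun i : Fin a.length => osupp (φ a[i])) ∘ Fin.cast (by simp) := by
    funext i
    simp
  have hB : ((b.map ψ).map osupp).get =
      (fun k : Fin b.length => osupp (ψ b[k])) ∘ Fin.cast (by simp) := by
    funext k
    simp
  change SetFamSubeq G _ _ ↔ _
  rw [hA, hB, setFamSubeq_comp_cast]

lemma isOpen_osupp (f : C(X, ℝ≥0)) : IsOpen (osupp f) :=
  isOpen_compl_singleton.preimage f.continuous

lemma osupp_cutFun (f : C(X, ℝ≥0)) (ε : ℝ≥0) : osupp (cutFun f ε) = {x | ε < f x} := by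
  ext x
  simp [osupp, cutFun, tsub_eq_zero_iff_le]

lemma dynSubeq_cutList_of_le (a : List C(X, ℝ≥0)) {ε ε' : ℝ≥0} (h : ε ≤ ε') :
    DynSubeq G (cutList a ε') (cutList a ε) :=
  dynSubeq_map_iff.2 <| .of_subset (fun _ => isOpen_osupp _) fun i x hx => by
    rw [osupp_cutFun] at hx ⊢
    exact h.trans_lt hx

lemma cutList_cutList (a : List C(X, ℝ≥0)) (ε δ : ℝ≥0) :
    cutList (cutList a ε) δ = cutList a (ε + δ) := by
  simp only [cutList, List.map_map]
  congr 1
  ext f x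
  simp [cutFun, tsub_tsub]

lemma cutList_append (a b : List C(X, ℝ≥0)) (ε : ℝ≥0) :
    cutList (a ++ b) ε = cutList a ε ++ cutList b ε :=
  List.map_append

lemma IsCompact.eventually_forall_lt {α : Type*} [TopologicalSpace α] [LinearOrder α]
    [OrderClosedTopology α] {K : Set X} (hK : IsCompact K) {g : X → α} (hg : Continuous g)
    {c : α} (hc : ∀ x ∈ K, c < g x) : ∀ᶠ δ in 𝓝 c, ∀ x ∈ K, δ < g x :=
  hK.eventually_forall_of_forall_eventually fun x hx =>
    (isOpen_lt continuous_fst (hg.comp continuous_snd)).mem_nhds (hc x hx)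

theorem SetFamSubeq.exists_cut [CompactSpace X] [NormalSpace X]
    (hG : ∀ g : G, Continuous fun x : X => g • x) {n m : ℕ}
    {f : Fin n → C(X, ℝ≥0)} {g : Fin m → C(X, ℝ≥0)}
    (h : SetFamSubeq G (fun i => osupp (f i)) (fun k => osupp (g k))) {ε : ℝ≥0} (hε : 0 < ε) :
    ∃ δ : ℝ≥0, 0 < δ ∧
      SetFamSubeq G (fun i => {x | ε < f i x}) (fun k => {x | δ < g k x}) := by
  have hclosed : ∀ i, IsClosed {x | ε ≤ f i x} := fun i =>
    isClosed_le continuous_const (f i).continuous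
  obtain ⟨J, U, s, k, hUo, hcover, hUB, hdisj⟩ :=
    h (fun i => {x | ε ≤ f i x}) fun i => ⟨hclosed i, fun x hx => (hε.trans_le hx).ne'⟩
  choose V hVcover hVo hVU using fun i =>
    exists_subset_iUnion_closure_subset (hclosed i) (hUo i) (fun _ _ => Set.toFinite _)
      (hcover i)
  -- the compact sets `s • closure V` lie in the open supports, hence in `{δ < g k}` for small δ
  have hsmall : ∀ᶠ δ in 𝓝[>] (0 : ℝ≥0), ∀ p : Σ i, Fin (J i),
      ∀ x ∈ s p.1 p.2 • closure (V p.1 p.2), δ < g (k p.1 p.2) x := by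
    refine nhdsWithin_le_nhds (eventually_all.2 fun p => ?_)
    refine IsCompact.eventually_forall_lt ?_ (g _).continuous fun x hx => ?_
    · rw [← Set.image_smul]
      exact isClosed_closure.isCompact.image (hG _)
    · exact pos_iff_ne_zero.2 (hUB _ _ (Set.smul_set_mono (hVU _ _) hx))
  obtain ⟨δ, hδ, hδpos⟩ := (hsmall.and self_mem_nhdsWithin).exists
  refine ⟨δ, hδpos, fun F hF => ⟨J, V, s, k, hVo, fun i => ?_, fun i j x hx => ?_, ?_⟩⟩
  · exact (hF i).2.trans fun x (hx : ε < f i x) => hVcover i hx.le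
  · exact hδ ⟨i, j⟩ x (Set.smul_set_mono subset_closure hx)
  · refine fun p q hpq hk => (hdisj p q hpq hk).mono ?_ ?_ <;>
      exact Set.smul_set_mono (subset_closure.trans (hVU _ _))

theorem DynSubeq.exists_cutList [CompactSpace X] [NormalSpace X]
    (hG : ∀ g : G, Continuous fun x : X => g • x) {a b : List C(X, ℝ≥0)}
    (h : DynSubeq G a b) {ε : ℝ≥0} (hε : 0 < ε) :
    ∃ δ : ℝ≥0, 0 < δ ∧ DynSubeq G (cutList a ε) (cutList b δ) := by
  rw [← List.map_id a, ← List.map_id b, dynSubeq_map_iff] at h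
  obtain ⟨δ, hδ, hcut⟩ := h.exists_cut hG hε
  refine ⟨δ, hδ, dynSubeq_map_iff.2 ?_⟩
  simpa only [osupp_cutFun, id] using hcut

lemma biSup_pos_biSup_pos_add {α : Type*} [CompleteLattice α] (f : ℝ≥0 → α) :
    ⨆ (ε : ℝ≥0) (_ : 0 < ε), ⨆ (δ : ℝ≥0) (_ : 0 < δ), f (ε + δ) =
      ⨆ (η : ℝ≥0) (_ : 0 < η), f η := by
  refine le_antisymm (iSup₂_le fun ε hε => iSup₂_le fun δ hδ =>
    le_iSup₂_of_le (ε + δ) (add_pos hε hδ) le_rfl) (iSup₂_le fun η hη => ?_)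
  have hhalf : 0 < η / 2 := half_pos hη
  exact le_iSup₂_of_le (η / 2) hhalf <| le_iSup₂_of_le (η / 2) hhalf (by rw [add_halves])

lemma Antitone.biSup_pos_add {f g : ℝ≥0 → ℝ≥0∞} (hf : Antitone f) (hg : Antitone g) :
    ⨆ (ε : ℝ≥0) (_ : 0 < ε), (f ε + g ε) =
      (⨆ (ε : ℝ≥0) (_ : 0 < ε), f ε) + ⨆ (ε : ℝ≥0) (_ : 0 < ε), g ε := by
  simp only [iSup_subtype']
  exact (ENNReal.iSup_add_iSup fun ε δ =>
    ⟨min ε δ, add_le_add (hf (min_le_left ε δ)) (hg (min_le_right ε δ))⟩).symm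

namespace DynState

variable (D : DynState X G)

/-- The paper's `D̄`. -/
noncomputable def regularize (a : List C(X, ℝ≥0)) : ℝ≥0∞ :=
  ⨆ (ε : ℝ≥0) (_ : 0 < ε), D.toFun (cutList a ε)

lemma antitone_toFun_cutList (a : List C(X, ℝ≥0)) :
    Antitone fun ε => D.toFun (cutList a ε) :=
  fun _ _ h => D.mono _ _ (dynSubeq_cutList_of_le a h)

lemma regularize_mono [CompactSpace X] [NormalSpace X]
    (hG : ∀ g : G, Continuous fun x : X => g • x) {a b : List C(X, ℝ≥0)}
    (h : DynSubeq G a b) : D.regularize a ≤ D.regularize b := by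
  refine iSup₂_le fun ε hε => ?_
  obtain ⟨δ, hδ, hcut⟩ := h.exists_cutList hG hε
  exact (D.mono _ _ hcut).trans (le_iSup₂_of_le δ hδ le_rfl)

lemma regularize_append (a b : List C(X, ℝ≥0)) :
    D.regularize (a ++ b) = D.regularize a + D.regularize b := by
  simp only [regularize, cutList_append, D.additive]
  exact (D.antitone_toFun_cutList a).biSup_pos_add (D.antitone_toFun_cutList b)

lemma regularize_nil : D.regularize [] = 0 := by
  simp [regularize, cutList, D.zero']

lemma regularize_cutList (a : List C(X, ℝ≥0)) (ε : ℝ≥0) :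
    D.regularize (cutList a ε) = ⨆ (δ : ℝ≥0) (_ : 0 < δ), D.toFun (cutList a (ε + δ)) := by
  simp only [regularize, cutList_cutList]

noncomputable def lscRegularization [CompactSpace X] [NormalSpace X]
    (hG : ∀ g : G, Continuous fun x : X => g • x) : DynState X G where
  toFun := D.regularize
  mono _ _ := D.regularize_mono hG
  additive := D.regularize_append
  zero' := D.regularize_nil

lemma lsc_lscRegularization [CompactSpace X] [NormalSpace X]
    (hG : ∀ g : G, Continuous fun x : X => g • x) : (D.lscRegularization hG).LSC := fun a => by
  simp only [lscRegularization, regularize_cutList]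
  exact (biSup_pos_biSup_pos_add fun η => D.toFun (cutList a η)).symm

end DynState

theorem lscState_of_state_general {X : Type*} [TopologicalSpace X] [CompactSpace X]
    [T2Space X]
    {G : Type*} [Group G] [MulAction G X]
    (hG : ∀ g : G, Continuous fun x : X => g • x)
    (D : DynState X G) :
    ∃ E : DynState X G,
      (∀ a : List C(X, ℝ≥0),
        E.toFun a = ⨆ (ε : ℝ≥0) (_ : 0 < ε), D.toFun (cutList a ε)) ∧
      E.LSC :=
  ⟨D.lscRegularization hG, fun _ => rfl, D.lsc_lscRegularization hG⟩

/-- **Proposition 3.4.** For every state `D` on `W(X, G)`, the function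
`D̄([a]) = sup_{ε>0} D([(a-ε)₊])` is a lower semi-continuous state on `W(X, G)`. -/
theorem lscState_of_state {X : Type*} [TopologicalSpace X] [CompactSpace X]
    [T2Space X] [TopologicalSpace.MetrizableSpace X]
    {G : Type*} [Group G] [MulAction G X]
    (hG : ∀ g : G, Continuous fun x : X => g • x)
    (D : DynState X G) :
    ∃ E : DynState X G,
      (∀ a : List C(X, ℝ≥0),
        E.toFun a = ⨆ (ε : ℝ≥0) (_ : 0 < ε), D.toFun (cutList a ε)) ∧
      E.LSC :=
  lscState_of_state_general hG D
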